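/- Let X be a real Banach space, Φ, Ψ ∈ C¹(X), λ > 0, J_λ = Φ − λΨ, r ∈ ℝ and ū ∈ X satisfy: (A1) inf_{u∈X} Φ(u) = Φ(0) = Ψ(0) = 0; (A2) 0 < Φ(ū) < r; (A3) sup_{Φ(u)≤r} Ψ(u)/r < Ψ(ū)/Φ(ū); (A4) inf_{u∈X} J_λ(u) = −∞ for all λ ∈ I_r := ( Φ(ū)/Ψ(ū) , [sup_{Φ(u)≤r} Ψ(u)/r]^{−1} ). Then for every λ ∈ I_r for which J_λ satisfies the Palais–Smale condition, there exist u_λ, v_λ ∈ X with J_λ'(u_λ) = J_λ'(v_λ) = 0 and J_λ(u_λ) < 0 < J_λ(v_λ). -/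

import Mathlib

open Filter Topology

noncomputable section

/-- The Palais–Smale condition for a `C¹` functional `J` on a Banach space:
every sequence along which `J` converges and `J'` tends to `0` in the dual
has a convergent subsequence. -/
def PalaisSmale {X : Type*} [NormedAddCommGroup X] [NormedSpace ℝ X] (J : X → ℝ) : Prop :=
  ∀ (u : ℕ → X) (c : ℝ),
    Tendsto (fun n => J (u n)) atTop (𝓝 c) →
    Tendsto (fun n => fderiv ℝ J (u n)) atTop (𝓝 (0 : X →L[ℝ] ℝ)) →
    ∃ (v : X) (φ : ℕ → ℕ), StrictMono φ ∧ Tendsto (fun k => u (φ k)) atTop (𝓝 v)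

/-!
Write `J = Φ - λΨ` and `s = sup_{Φ ≤ r} Ψ / r`. For `λ ∈ I_r` we have `ρ := λ s r < r`,
`J ≥ Φ - ρ` on the sublevel set `{Φ ≤ r}`, and `J ū < 0`. Minimizing `J` over `{Φ ≤ r}` with
Ekeland's principle gives almost critical points with `Φ < ρ`, hence interior ones, and (PS)
turns them into a critical point `u` with `J u < 0`. As `J` is unbounded below, some `b` has
`J b < -ρ`, which forces `Φ b > r`; every path from `u` to `b` crosses `{Φ = (ρ + r) / 2}`, where
`J ≥ (r - ρ) / 2 > 0`. Ekeland's principle on the complete space of such paths, combined with a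
deformation along a pseudo-gradient field, yields (PS) sequences at the positive minimax level.
-/

section Ekeland

variable {α : Type*} [PseudoMetricSpace α] {J : α → ℝ} {ε : ℝ}

def ekelandSet (J : α → ℝ) (ε : ℝ) (x : α) : Set α := {y | J y + ε * dist y x ≤ J x}

theorem self_mem_ekelandSet (x : α) : x ∈ ekelandSet J ε x := by
  simp [ekelandSet]

theorem ekelandSet_subset_of_mem (hε : 0 ≤ ε) {x y : α} (hy : y ∈ ekelandSet J ε x) :
    ekelandSet J ε y ⊆ ekelandSet J ε x := fun w hw => by
  simp only [ekelandSet, Set.mem_ofPred_eq] at hy hw ⊢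
  nlinarith [dist_triangle w y x]

theorem LowerSemicontinuous.isClosed_ekelandSet (hJ : LowerSemicontinuous J) (x : α) :
    IsClosed (ekelandSet J ε x) :=
  (hJ.add (continuous_const.mul (continuous_id.dist continuous_const)).lowerSemicontinuous
    ).isClosed_preimage (J x)

theorem exists_mem_ekelandSet_forall_le_add (hbdd : BddBelow (Set.range J)) (x : α) {δ : ℝ}
    (hδ : 0 < δ) : ∃ y ∈ ekelandSet J ε x, ∀ w ∈ ekelandSet J ε x, J y ≤ J w + δ := by
  have hbdd' : BddBelow (J '' ekelandSet J ε x) := hbdd.mono (Set.image_subset_range _ _)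
  obtain ⟨_, ⟨y, hy, rfl⟩, hlt⟩ := exists_lt_of_csInf_lt
    ((Set.nonempty_of_mem (self_mem_ekelandSet x)).image J) (lt_add_of_pos_right _ hδ)
  exact ⟨y, hy, fun w hw => by linarith [csInf_le hbdd' (Set.mem_image_of_mem J hw)]⟩

theorem ekelandSet_subset_closedBall (hε : 0 < ε) {x y : α} {δ : ℝ}
    (hy : y ∈ ekelandSet J ε x) (hmin : ∀ w ∈ ekelandSet J ε x, J y ≤ J w + δ) :
    ekelandSet J ε y ⊆ Metric.closedBall y (δ / ε) := fun w hw => by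
  have := hmin w (ekelandSet_subset_of_mem hε.le hy hw)
  simp only [ekelandSet, Set.mem_ofPred_eq] at hw
  rw [Metric.mem_closedBall, le_div_iff₀ hε]
  linarith

theorem LowerSemicontinuous.exists_le_forall_le_add_dist [CompleteSpace α]
    (hJ : LowerSemicontinuous J) (hbdd : BddBelow (Set.range J)) (hε : 0 < ε) (x₀ : α) :
    ∃ v, J v ≤ J x₀ ∧ ∀ w, J v ≤ J w + ε * dist v w := by
  choose next hnext hmin using fun (n : ℕ) (x : α) =>
    exists_mem_ekelandSet_forall_le_add (ε := ε) hbdd x (Nat.one_div_pos_of_nat (n := n))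
  let x : ℕ → α := fun n => Nat.rec x₀ (fun n y => next n y) n
  let s : ℕ → Set α := fun n => ekelandSet J ε (x n)
  have hs_anti : Antitone s :=
    antitone_nat_of_succ_le fun n => ekelandSet_subset_of_mem hε.le (hnext n (x n))
  have hs_ball (n : ℕ) : s (n + 1) ⊆ Metric.closedBall (x (n + 1)) (1 / (n + 1) / ε) :=
    ekelandSet_subset_closedBall hε (hnext n (x n)) (hmin n (x n))
  obtain ⟨v, hv⟩ : (⋂ n, s (n + 1)).Nonempty := by
    refine Metric.nonempty_iInter_of_nonempty_biInter (fun n => hJ.isClosed_ekelandSet _)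
      (fun n => Metric.isBounded_closedBall.subset (hs_ball n))
      (fun N => ⟨x (N + 1), Set.mem_iInter₂.mpr fun n hn =>
        hs_anti (show n + 1 ≤ N + 1 by omega) (self_mem_ekelandSet (x (N + 1)))⟩) ?_
    have hradius : Tendsto (fun n : ℕ => 2 * (1 / ((n : ℝ) + 1) / ε)) atTop (𝓝 0) := by
      simpa using (tendsto_one_div_add_atTop_nhds_zero_nat.div_const ε).const_mul 2
    refine squeeze_zero (fun n => Metric.diam_nonneg) (fun n => ?_) hradius
    exact (Metric.diam_mono (hs_ball n) Metric.isBounded_closedBall).trans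
      (Metric.diam_closedBall (by positivity))
  rw [Set.mem_iInter] at hv
  have hv₀ : v ∈ ekelandSet J ε x₀ := hs_anti (Nat.zero_le 1) (hv 0)
  simp only [ekelandSet, Set.mem_ofPred_eq] at hv₀
  refine ⟨v, by nlinarith [dist_nonneg (x := v) (y := x₀)], fun w => ?_⟩
  -- each `w ∈ ekelandSet J ε v` lies in every `s n`, on which `x (n + 1)` is a `1/(n+1)`-minimizer
  by_cases hw : w ∈ ekelandSet J ε v
  · have hvw : J v ≤ J w := le_of_forall_pos_lt_add fun δ hδ => by
      obtain ⟨n, hn⟩ := exists_nat_one_div_lt hδ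
      have hv_le : J v ≤ J (x (n + 1)) := by
        have := hv n
        simp only [s, ekelandSet, Set.mem_ofPred_eq] at this
        nlinarith [dist_nonneg (x := v) (y := x (n + 1))]
      have := hmin n (x n) w (ekelandSet_subset_of_mem hε.le (hs_anti n.le_succ (hv n)) hw)
      linarith
    nlinarith [dist_nonneg (x := v) (y := w)]
  · simp only [ekelandSet, Set.mem_ofPred_eq, not_le] at hw
    rw [dist_comm]
    linarith

end Ekeland

section Calculus

variable {X : Type*} [NormedAddCommGroup X] [NormedSpace ℝ X]

theorem PalaisSmale.exists_mem_closure_fderiv_eq_zero {J : X → ℝ} (hPS : PalaisSmale J)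
    (hJ : ContDiff ℝ 1 J) {S : Set X} {c : ℝ}
    (happrox : ∀ ε > 0, ∃ x ∈ S, |J x - c| ≤ ε ∧ ‖fderiv ℝ J x‖ ≤ ε) :
    ∃ v ∈ closure S, J v = c ∧ fderiv ℝ J v = 0 := by
  choose x hxS hxJ hxJ' using fun n : ℕ => happrox (1 / (n + 1)) Nat.one_div_pos_of_nat
  have hlim : Tendsto (fun n => J (x n)) atTop (𝓝 c) := by
    rw [← tendsto_sub_nhds_zero_iff]
    exact squeeze_zero_norm hxJ tendsto_one_div_add_atTop_nhds_zero_nat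
  have hlim' : Tendsto (fun n => fderiv ℝ J (x n)) atTop (𝓝 0) :=
    squeeze_zero_norm hxJ' tendsto_one_div_add_atTop_nhds_zero_nat
  obtain ⟨v, φ, hφ, hxv⟩ := hPS x c hlim hlim'
  refine ⟨v, mem_closure_of_tendsto hxv (.of_forall fun k => hxS (φ k)), ?_, ?_⟩
  · exact tendsto_nhds_unique ((hJ.continuous.tendsto v).comp hxv) (hlim.comp hφ.tendsto_atTop)
  · exact tendsto_nhds_unique (((hJ.continuous_fderiv one_ne_zero).tendsto v).comp hxv)
      (hlim'.comp hφ.tendsto_atTop)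

theorem norm_fderiv_le_of_eventually_le_add_dist {f : X → ℝ} {v : X}
    (hf : DifferentiableAt ℝ f v) {ε : ℝ} (hε : 0 ≤ ε)
    (h : ∀ᶠ w in 𝓝 v, f v ≤ f w + ε * dist v w) : ‖fderiv ℝ f v‖ ≤ ε := by
  have hlower : ∀ u : X, -(ε * ‖u‖) ≤ fderiv ℝ f v u := by
    intro u
    have hline : HasDerivAt (fun t : ℝ => v + t • u) u 0 := by
      simpa using ((hasDerivAt_id (0 : ℝ)).smul_const u).const_add v
    have hf' : HasFDerivAt f (fderiv ℝ f v) (v + (0 : ℝ) • u) := by simpa using hf.hasFDerivAt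
    have hslope :
        Tendsto (slope (fun t : ℝ => f (v + t • u)) 0) (𝓝[>] 0) (𝓝 (fderiv ℝ f v u)) :=
      (hasDerivAt_iff_tendsto_slope.mp (hf'.comp_hasDerivAt 0 hline)).mono_left
        (nhdsWithin_mono _ fun t ht => ne_of_gt ht)
    refine ge_of_tendsto hslope ?_
    have hnear : ∀ᶠ t in 𝓝[>] (0 : ℝ), f v ≤ f (v + t • u) + ε * dist v (v + t • u) :=
      nhdsWithin_le_nhds (((continuous_const.add (continuous_id.smul continuous_const)).tendsto'
        0 v (by simp)).eventually h)
    filter_upwards [hnear, self_mem_nhdsWithin] with t ht (htpos : 0 < t)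
    rw [dist_self_add_right, norm_smul, Real.norm_of_nonneg htpos.le] at ht
    rw [slope_def_field, zero_smul, add_zero, sub_zero, le_div_iff₀ htpos]
    nlinarith
  refine ContinuousLinearMap.opNorm_le_bound _ hε fun u => abs_le.mpr ⟨hlower u, ?_⟩
  simpa using hlower (-u)

theorem ContinuousLinearMap.exists_norm_le_one_apply_lt_neg (f : X →L[ℝ] ℝ) {c : ℝ}
    (hc : c < ‖f‖) : ∃ u : X, ‖u‖ ≤ 1 ∧ f u < -c := by
  obtain ⟨u, hu, hfu⟩ := f.exists_lt_apply_of_lt_opNorm hc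
  rcases lt_abs.mp (Real.norm_eq_abs _ ▸ hfu) with h | h
  · exact ⟨-u, by simpa using hu.le, by simpa using neg_lt_neg h⟩
  · exact ⟨u, hu.le, by linarith⟩

theorem exists_continuous_descent_field {K : Type*} [TopologicalSpace K] [NormalSpace K]
    [ParacompactSpace K] {g : K → X →L[ℝ] ℝ} (hg : Continuous g) {M W : Set K}
    (hM : IsClosed M) (hW : IsOpen W) (hMW : M ⊆ W) {c : ℝ} (hc : 0 ≤ c)
    (hgM : ∀ x ∈ M, c < ‖g x‖) :
    ∃ v : C(K, X), ∀ x, ‖v x‖ ≤ 1 ∧ g x (v x) ≤ 0 ∧ (x ∈ M → g x (v x) ≤ -c) ∧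
      (x ∉ W → v x = 0) := by
  refine exists_continuous_forall_mem_convex_of_local_const (t := fun x => {v : X | ‖v‖ ≤ 1 ∧
    g x v ≤ 0 ∧ (x ∈ M → g x v ≤ -c) ∧ (x ∉ W → v = 0)}) (fun x => ?_) fun x => ?_
  · rintro a ⟨ha₁, ha₂, ha₃, ha₄⟩ b ⟨hb₁, hb₂, hb₃, hb₄⟩ μ ν hμ hν hμν
    have hg_comb : g x (μ • a + ν • b) = μ * g x a + ν * g x b := by simp
    refine ⟨?_, ?_, fun hx => ?_, fun hx => by simp [ha₄ hx, hb₄ hx]⟩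
    · simpa using
        convex_closedBall (0 : X) 1 (by simpa using ha₁) (by simpa using hb₁) hμ hν hμν
    · rw [hg_comb]; nlinarith
    · rw [hg_comb]; nlinarith [ha₃ hx, hb₃ hx]
  · by_cases hx : x ∈ M
    · obtain ⟨u, hu, hgu⟩ := (g x).exists_norm_le_one_apply_lt_neg (hgM x hx)
      refine ⟨u, ?_⟩
      have hopen : IsOpen {y | g y u < -c} :=
        isOpen_lt (hg.clm_apply continuous_const) continuous_const
      filter_upwards [hopen.mem_nhds hgu, hW.mem_nhds (hMW hx)] with y hy hyW
      exact ⟨hu, by linarith, fun _ => hy.le, fun h => absurd hyW h⟩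
    · exact ⟨0, by filter_upwards [hM.isOpen_compl.mem_nhds hx] with y hy using by simp_all⟩

theorem ContDiff.eventually_forall_le_add_smul {K : Type*} [TopologicalSpace K] [CompactSpace K]
    {J : X → ℝ} (hJ : ContDiff ℝ 1 J) {p v : K → X} (hp : Continuous p) (hv : Continuous v)
    {ε : ℝ} (hε : 0 < ε) :
    ∀ᶠ τ in 𝓝[>] (0 : ℝ), ∀ t,
      J (p t + τ • v t) ≤ J (p t) + τ * (fderiv ℝ J (p t) (v t) + ε) := by
  have hnear : ∀ᶠ a in 𝓝 (0 : ℝ), ∀ t ∈ Set.univ,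
      ‖fderiv ℝ J (p t + a • v t) - fderiv ℝ J (p t)‖ * ‖v t‖ < ε := by
    refine isCompact_univ.eventually_forall_of_forall_eventually fun t _ => ?_
    have hcont : Continuous fun z : ℝ × K =>
        ‖fderiv ℝ J (p z.2 + z.1 • v z.2) - fderiv ℝ J (p z.2)‖ * ‖v z.2‖ := by fun_prop
    exact hcont.continuousAt.eventually_lt continuousAt_const (by simpa using hε)
  obtain ⟨δ, hδ, hδnear⟩ := Metric.eventually_nhds_iff.mp hnear
  filter_upwards [Ioo_mem_nhdsGT hδ] with τ hτ t
  have hderiv (a : ℝ) :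
      HasDerivAt (fun a : ℝ => J (p t + a • v t)) (fderiv ℝ J (p t + a • v t) (v t)) a :=
    (hJ.differentiable one_ne_zero _).hasFDerivAt.comp_hasDerivAt a
      (by simpa using ((hasDerivAt_id a).smul_const (v t)).const_add (p t))
  obtain ⟨a, ha, hslope⟩ := exists_hasDerivAt_eq_slope _ _ hτ.1
    (fun a _ => (hderiv a).continuousAt.continuousWithinAt) fun a _ => hderiv a
  have hclose := hδnear (y := a) (by simpa [abs_of_pos ha.1] using ha.2.trans hτ.2) t trivial
  have hdiff : fderiv ℝ J (p t + a • v t) (v t) - fderiv ℝ J (p t) (v t) ≤ ε := by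
    calc _ = (fderiv ℝ J (p t + a • v t) - fderiv ℝ J (p t)) (v t) := rfl
      _ ≤ ‖fderiv ℝ J (p t + a • v t) - fderiv ℝ J (p t)‖ * ‖v t‖ :=
        le_of_abs_le (Real.norm_eq_abs _ ▸ ContinuousLinearMap.le_opNorm _ _)
      _ ≤ ε := hclose.le
  rw [zero_smul, add_zero, sub_zero, eq_div_iff hτ.1.ne'] at hslope
  nlinarith [hτ.1]

end Calculus

section Paths

variable {X : Type*} [TopologicalSpace X] {J : X → ℝ}

def pathMax (J : X → ℝ) (γ : C(unitInterval, X)) : ℝ := ⨆ t, J (γ t)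

theorem le_pathMax (hJ : Continuous J) (γ : C(unitInterval, X)) (t : unitInterval) :
    J (γ t) ≤ pathMax J γ :=
  le_ciSup (isCompact_range (hJ.comp γ.continuous)).bddAbove t

theorem pathMax_le {γ : C(unitInterval, X)} {c : ℝ} (h : ∀ t, J (γ t) ≤ c) : pathMax J γ ≤ c :=
  ciSup_le h

theorem lowerSemicontinuous_pathMax (hJ : Continuous J) : LowerSemicontinuous (pathMax J) :=
  lowerSemicontinuous_ciSup (fun γ => (isCompact_range (hJ.comp γ.continuous)).bddAbove)
    fun t => (hJ.comp (continuous_eval_const t)).lowerSemicontinuous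

end Paths

theorem exists_path_deformation {X : Type*} [NormedAddCommGroup X] [NormedSpace ℝ X]
    {J : X → ℝ} (hJ : ContDiff ℝ 1 J) (γ : C(unitInterval, X)) {ε : ℝ} (hε : 0 < ε)
    (h₀ : J (γ 0) < pathMax J γ - ε) (h₁ : J (γ 1) < pathMax J γ - ε)
    (hcrit : ∀ t, pathMax J γ - ε ≤ J (γ t) → 2 * ε < ‖fderiv ℝ J (γ t)‖) :
    ∃ σ : C(unitInterval, X), σ 0 = γ 0 ∧ σ 1 = γ 1 ∧
      pathMax J σ < pathMax J γ - ε * dist σ γ := by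
  set F := pathMax J γ
  set M : Set unitInterval := {t | F - ε ≤ J (γ t)}
  have hM : IsClosed M := isClosed_le continuous_const (hJ.continuous.comp γ.continuous)
  have hMW : M ⊆ {0, 1}ᶜ := by
    rintro t ht (rfl | rfl)
    exacts [(not_le.mpr h₀) ht, (not_le.mpr h₁) ht]
  obtain ⟨v, hv⟩ := exists_continuous_descent_field (g := fun t => fderiv ℝ J (γ t))
    ((hJ.continuous_fderiv one_ne_zero).comp γ.continuous) hM
    (Set.toFinite _).isClosed.isOpen_compl hMW (by positivity : 0 ≤ 2 * ε) hcrit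
  -- `τ ≤ 1 / 2` keeps the points where `J (γ t) < F - ε` below `F - 3 / 2 * ε * τ`
  obtain ⟨τ, hτ, hτ_pos, hτ_le⟩ := ((hJ.eventually_forall_le_add_smul γ.continuous v.continuous
    (half_pos hε)).and (Ioc_mem_nhdsGT (by norm_num : (0 : ℝ) < 1 / 2))).exists
  have hdist : dist (γ + τ • v) γ ≤ τ := by
    refine (ContinuousMap.dist_le hτ_pos.le).mpr fun t => ?_
    simpa [dist_eq_norm, norm_smul, abs_of_pos hτ_pos] using
      mul_le_of_le_one_right hτ_pos.le (hv t).1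
  have hdescent : ∀ t, J (γ t + τ • v t) ≤ F - 3 / 2 * ε * τ := by
    intro t
    have hexp := hτ t
    by_cases ht : t ∈ M
    · nlinarith [(hv t).2.2.1 ht, le_pathMax hJ.continuous γ t]
    · have : J (γ t) < F - ε := not_le.mp ht
      nlinarith [(hv t).2.1]
  refine ⟨γ + τ • v, by simp [(hv 0).2.2.2 (by simp)], by simp [(hv 1).2.2.2 (by simp)], ?_⟩
  calc pathMax J (γ + τ • v) ≤ F - 3 / 2 * ε * τ := pathMax_le hdescent
    _ < F - ε * τ := by nlinarith
    _ ≤ F - ε * dist (γ + τ • v) γ := by nlinarith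

section CriticalPoints

variable {X : Type*} [NormedAddCommGroup X] [NormedSpace ℝ X] [CompleteSpace X] {J : X → ℝ}

theorem PalaisSmale.exists_isMinOn_fderiv_eq_zero (hPS : PalaisSmale J)
    (hJ : ContDiff ℝ 1 J) {C : Set X} (hC : IsClosed C) (hbdd : BddBelow (J '' C)) {ℓ : ℝ}
    (hℓ : ∃ x ∈ C, J x < ℓ) (hint : ∀ x ∈ C, J x < ℓ → x ∈ interior C) :
    ∃ u ∈ C, IsMinOn J C u ∧ fderiv ℝ J u = 0 := by
  have : CompleteSpace C := hC.completeSpace_coe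
  set c := sInf (J '' C)
  have hc_le : ∀ x ∈ C, c ≤ J x := fun x hx => csInf_le hbdd (Set.mem_image_of_mem J hx)
  obtain ⟨x, hx, hxℓ⟩ := hℓ
  have hcℓ : c < ℓ := (hc_le x hx).trans_lt hxℓ
  suffices happrox : ∀ ε > 0, ∃ x ∈ C, |J x - c| ≤ ε ∧ ‖fderiv ℝ J x‖ ≤ ε by
    obtain ⟨u, hu, hJu, hu'⟩ := hPS.exists_mem_closure_fderiv_eq_zero hJ happrox
    rw [hC.closure_eq] at hu
    exact ⟨u, hu, fun x hx => hJu ▸ hc_le x hx, hu'⟩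
  intro ε hε
  set η := min ε (ℓ - c)
  have hη : 0 < η := lt_min hε (sub_pos.mpr hcℓ)
  obtain ⟨_, ⟨x₀, hx₀, rfl⟩, hx₀c⟩ :=
    exists_lt_of_csInf_lt ⟨J x, Set.mem_image_of_mem J hx⟩ (lt_add_of_pos_right c hη)
  have hbdd' : BddBelow (Set.range fun y : C => J y) := by rwa [← Set.image_eq_range]
  obtain ⟨v, hv₀, hv⟩ := (hJ.continuous.comp continuous_subtype_val).lowerSemicontinuous
    |>.exists_le_forall_le_add_dist (J := fun y : C => J y) hbdd' hη ⟨x₀, hx₀⟩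
  have hvc : J v < c + η := hv₀.trans_lt hx₀c
  have hvC : (C : Set X) ∈ 𝓝 (v : X) :=
    mem_interior_iff_mem_nhds.mp (hint v v.2 (by linarith [min_le_right ε (ℓ - c)]))
  have hv' : ‖fderiv ℝ J v‖ ≤ η := by
    refine norm_fderiv_le_of_eventually_le_add_dist (hJ.differentiable one_ne_zero v) hη.le ?_
    filter_upwards [hvC] with w hw using hv ⟨w, hw⟩
  refine ⟨v, v.2, abs_le.mpr ⟨?_, ?_⟩, hv'.trans (min_le_left _ _)⟩
  · linarith [hc_le v v.2]
  · linarith [min_le_left ε (ℓ - c)]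

theorem PalaisSmale.exists_fderiv_eq_zero_of_mountain_pass (hPS : PalaisSmale J)
    (hJ : ContDiff ℝ 1 J) {a b : X} {β : ℝ} (ha : J a < β) (hb : J b < β)
    (hpath : ∀ γ : C(unitInterval, X), γ 0 = a → γ 1 = b → ∃ t, β ≤ J (γ t)) :
    ∃ v, fderiv ℝ J v = 0 ∧ β ≤ J v := by
  set Γ : Set C(unitInterval, X) := {γ | γ 0 = a ∧ γ 1 = b}
  have : CompleteSpace Γ := ((isClosed_eq (continuous_eval_const 0) continuous_const).inter
    (isClosed_eq (continuous_eval_const 1) continuous_const)).completeSpace_coe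
  have : Nonempty Γ := ⟨⟨⟨fun t => a + (t : ℝ) • (b - a), by fun_prop⟩, by simp, by simp⟩⟩
  have hβ_le (γ : Γ) : β ≤ pathMax J γ := by
    obtain ⟨t, ht⟩ := hpath γ γ.2.1 γ.2.2
    exact ht.trans (le_pathMax hJ.continuous γ t)
  set c := ⨅ γ : Γ, pathMax J γ
  have hbdd : BddBelow (Set.range fun γ : Γ => pathMax J γ) :=
    ⟨β, Set.forall_mem_range.mpr hβ_le⟩
  suffices happrox : ∀ ε > 0, ∃ x ∈ Set.univ, |J x - c| ≤ ε ∧ ‖fderiv ℝ J x‖ ≤ ε by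
    obtain ⟨v, -, hJv, hv⟩ := hPS.exists_mem_closure_fderiv_eq_zero hJ happrox
    exact ⟨v, hv, hJv ▸ le_ciInf hβ_le⟩
  intro ε hε
  obtain ⟨η, hη, hηε, hηab⟩ : ∃ η > 0, 2 * η ≤ ε ∧ max (J a) (J b) < β - η := by
    set δ := β - max (J a) (J b)
    have hδ : 0 < δ := sub_pos.mpr (max_lt ha hb)
    exact ⟨min (ε / 2) (δ / 2), lt_min (half_pos hε) (half_pos hδ),
      by linarith [min_le_left (ε / 2) (δ / 2)], by linarith [min_le_right (ε / 2) (δ / 2)]⟩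
  obtain ⟨γ₀, hγ₀⟩ := exists_lt_of_ciInf_lt (lt_add_of_pos_right c hη)
  obtain ⟨γ, hγγ₀, hγ⟩ := ((lowerSemicontinuous_pathMax hJ.continuous).comp
    continuous_subtype_val).exists_le_forall_le_add_dist (J := fun γ : Γ => pathMax J γ)
    hbdd hη γ₀
  -- otherwise a deformation of `γ` would violate Ekeland's inequality at `γ`
  obtain ⟨t, ht, ht'⟩ : ∃ t, pathMax J γ - η ≤ J (γ.1 t) ∧ ‖fderiv ℝ J (γ.1 t)‖ ≤ 2 * η := by
    by_contra! hcrit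
    obtain ⟨σ, hσ₀, hσ₁, hσ⟩ := exists_path_deformation hJ γ.1 hη
      (by rw [γ.2.1]; linarith [hβ_le γ, le_max_left (J a) (J b)])
      (by rw [γ.2.2]; linarith [hβ_le γ, le_max_right (J a) (J b)]) hcrit
    have := hγ ⟨σ, hσ₀.trans γ.2.1, hσ₁.trans γ.2.2⟩
    rw [Subtype.dist_eq, dist_comm] at this
    linarith
  refine ⟨γ.1 t, trivial, abs_le.mpr ⟨?_, ?_⟩, ht'.trans hηε⟩
  · linarith [ciInf_le hbdd γ]
  · linarith [le_pathMax hJ.continuous γ.1 t]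

end CriticalPoints

theorem exists_two_critical_points_of_sublevel_bound {X : Type*} [NormedAddCommGroup X]
    [NormedSpace ℝ X] [CompleteSpace X] {Φ J : X → ℝ} (hΦ : Continuous Φ)
    (hJ : ContDiff ℝ 1 J) (hPS : PalaisSmale J) (hΦ_nonneg : ∀ u, 0 ≤ Φ u) {ρ r : ℝ}
    (hρr : ρ < r) (hJ_ge : ∀ u, Φ u ≤ r → Φ u - ρ ≤ J u) {ubar : X} (hubar : Φ ubar ≤ r)
    (hJubar : J ubar < 0) (hunbdd : ¬ BddBelow (Set.range J)) :
    ∃ u v : X, fderiv ℝ J u = 0 ∧ fderiv ℝ J v = 0 ∧ J u < 0 ∧ 0 < J v := by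
  set C := {u | Φ u ≤ r}
  have hC : IsClosed C := isClosed_le hΦ continuous_const
  have hbdd : BddBelow (J '' C) :=
    ⟨-ρ, by rintro _ ⟨u, hu, rfl⟩; linarith [hJ_ge u hu, hΦ_nonneg u]⟩
  have hint (x) (hx : x ∈ C) (hJx : J x < 0) : x ∈ interior C :=
    interior_maximal (fun y (hy : Φ y < r) => hy.le) (isOpen_lt hΦ continuous_const)
      (by linarith [hJ_ge x hx] : Φ x < r)
  obtain ⟨u, huC, humin, hu⟩ :=
    hPS.exists_isMinOn_fderiv_eq_zero hJ hC hbdd ⟨ubar, hubar, hJubar⟩ hint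
  have hJu : J u < 0 := (humin hubar).trans_lt hJubar
  obtain ⟨_, ⟨b, rfl⟩, hb⟩ := not_bddBelow_iff.mp hunbdd (-ρ)
  have hΦb : r < Φ b := not_le.mp fun h => by linarith [hJ_ge b h, hΦ_nonneg b]
  have hcross (γ : C(unitInterval, X)) (hγ₀ : γ 0 = u) (hγ₁ : γ 1 = b) :
      ∃ t, (r - ρ) / 2 ≤ J (γ t) := by
    obtain ⟨t, ht⟩ : ∃ t, Φ (γ t) = (ρ + r) / 2 := intermediate_value_univ 0 1
      (hΦ.comp γ.continuous) ⟨by simp [hγ₀]; linarith [hJ_ge u huC], by simp [hγ₁]; linarith⟩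
    exact ⟨t, by linarith [hJ_ge (γ t) (by linarith)]⟩
  obtain ⟨v, hv, hJv⟩ := hPS.exists_fderiv_eq_zero_of_mountain_pass hJ (by linarith)
    (by linarith [hJ_ge ubar hubar, hΦ_nonneg ubar]) hcross
  exact ⟨u, v, hu, hv, hJu, by linarith⟩

-- an unbounded `S` has `sSup S = 0`, and then no positive number is below `(sSup S)⁻¹`
theorem Real.bddAbove_and_sSup_pos_of_lt_inv {S : Set ℝ} {a : ℝ} (ha : 0 < a)
    (hlt : a < (sSup S)⁻¹) : BddAbove S ∧ 0 < sSup S := by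
  have hs : 0 < sSup S := inv_pos.mp (ha.trans hlt)
  refine ⟨by_contra fun h => ?_, hs⟩
  simp [Real.sSup_of_not_bddAbove h] at hs

/-- Bonanno's two critical points theorem. -/
theorem bonanno_two_critical_points {X : Type*}
    [NormedAddCommGroup X] [NormedSpace ℝ X] [CompleteSpace X]
    (Φ Ψ : X → ℝ) (hΦ : ContDiff ℝ 1 Φ) (hΨ : ContDiff ℝ 1 Ψ)
    (r : ℝ) (ubar : X)
    (hA1 : Φ 0 = 0 ∧ Ψ 0 = 0 ∧ ∀ u : X, Φ 0 ≤ Φ u)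
    (hA2 : 0 < Φ ubar ∧ Φ ubar < r)
    (hA3 : sSup ((fun u => Ψ u / r) '' {u : X | Φ u ≤ r}) < Ψ ubar / Φ ubar)
    (hA4 : ∀ lam ∈ Set.Ioo (Φ ubar / Ψ ubar)
        (sSup ((fun u => Ψ u / r) '' {u : X | Φ u ≤ r}))⁻¹,
      ¬ BddBelow (Set.range fun u => Φ u - lam * Ψ u)) :
    ∀ lam ∈ Set.Ioo (Φ ubar / Ψ ubar)
        (sSup ((fun u => Ψ u / r) '' {u : X | Φ u ≤ r}))⁻¹,
      PalaisSmale (fun u => Φ u - lam * Ψ u) →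
      ∃ ulam vlam : X,
        fderiv ℝ (fun u => Φ u - lam * Ψ u) ulam = 0 ∧
        fderiv ℝ (fun u => Φ u - lam * Ψ u) vlam = 0 ∧
        Φ ulam - lam * Ψ ulam < 0 ∧ 0 < Φ vlam - lam * Ψ vlam := by
  intro lam hlam hPS
  obtain ⟨hΦ0, hΨ0, hΦ_min⟩ := hA1
  have hr : 0 < r := hA2.1.trans hA2.2
  set S := (fun u => Ψ u / r) '' {u : X | Φ u ≤ r}
  have h0S : (0 : ℝ) ∈ S := ⟨0, by simp [hΦ0, hr.le], by simp [hΨ0]⟩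
  have hΨubar : 0 < Ψ ubar :=
    (div_pos_iff_of_pos_right hA2.1).mp ((Real.sSup_nonneg' ⟨0, h0S, le_rfl⟩).trans_lt hA3)
  have hlam_pos : 0 < lam := (div_pos hA2.1 hΨubar).trans hlam.1
  obtain ⟨hbdd, hs⟩ := Real.bddAbove_and_sSup_pos_of_lt_inv hlam_pos hlam.2
  have hlam_s : lam * sSup S < 1 := by simpa [hs.ne'] using mul_lt_mul_of_pos_right hlam.2 hs
  refine exists_two_critical_points_of_sublevel_bound hΦ.continuous
    (hΦ.sub (contDiff_const.mul hΨ)) hPS (fun u => hΦ0 ▸ hΦ_min u)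
    (ρ := lam * sSup S * r) (by nlinarith) (fun u hu => ?_) hA2.2.le ?_ (hA4 lam hlam)
  · have : Ψ u / r ≤ sSup S := le_csSup hbdd ⟨u, hu, rfl⟩
    rw [div_le_iff₀ hr] at this
    nlinarith
  · have := hlam.1
    rw [div_lt_iff₀ hΨubar] at this
    linarith
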